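/- Let D ≥ 1 and let l : ℝ^D → ℝ be differentiable everywhere, bounded below with infimum inf l, and have an L-Lipschitz gradient: ‖∇l(a) − ∇l(b)‖₂ ≤ L‖a − b‖₂ for all a, b ∈ ℝ^D. Fix γ > 0, a deterministic starting point δ⁰ ∈ ℝ^D, step sizes ε₀, …, ε_{T−1} ≥ 0, and let z₀, …, z_{T−1} be independent random vectors in ℝ^D, each with independent standard normal coordinates. Define the random iterates δ^{t+1} = δ^t − ε_t·sign(∇l(δ^t) + γ z_t) (sign applied componentwise). Then Σ_{t=0}^{T−1} ε_t · E[ Σ_{i=1}^{D} |∂_i l(δ^t)|·(2Φ(|∂_i l(δ^t)|/γ) − 1) ] ≤ l(δ⁰) − inf l + (L·D/2)·Σ_{t=0}^{T−1} ε_t². -/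

import Mathlib

open MeasureTheory ProbabilityTheory

/-- The cumulative distribution function of the standard normal distribution. -/
noncomputable def Phi (x : ℝ) : ℝ := ((gaussianReal 0 1) (Set.Iic x)).toReal

/-- The law of `T` independent random vectors in `ℝ^D`, each with i.i.d. standard
normal coordinates. -/
noncomputable def prodGaussian (T D : ℕ) : Measure (Fin T → Fin D → ℝ) :=
  Measure.pi fun _ => Measure.pi fun _ => gaussianReal 0 1

/-!
Each step is controlled by the descent lemma for a function with `L`-Lipschitz gradient:
`l(δ^{t+1}) ≤ l(δ^t) - ε_t ⟪∇l(δ^t), sign(∇l(δ^t) + γ z_t)⟫ + L D ε_t² / 2`, the sign vector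
having norm at most `√D`. The iterate `δ^t` depends only on `z_0, …, z_{t-1}`, so the expectation
over `z_t` may be taken first, coordinatewise: `E[sign(a + γ Z)] = 2Φ(a/γ) - 1` for a standard
normal `Z`, and `a (2Φ(a/γ) - 1) = |a| (2Φ(|a|/γ) - 1)` by the symmetry `Φ(-x) = 1 - Φ(x)`.
Summing over `t` telescopes, and `E[l(δ^T)] ≥ inf l`.
-/

open Set Function RealInnerProductSpace

theorem Real.monotone_sign : Monotone Real.sign := by
  intro a b hab
  rcases lt_trichotomy a 0 with ha | rfl | ha
  · rw [Real.sign_of_neg ha]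
    rcases Real.sign_apply_eq b with h | h | h <;> rw [h] <;> norm_num
  · rcases lt_trichotomy b 0 with hb | rfl | hb
    · linarith
    · rfl
    · simp [Real.sign_of_pos hb]
  · rw [Real.sign_of_pos ha, Real.sign_of_pos (ha.trans_le hab)]

@[fun_prop]
theorem Real.measurable_sign : Measurable Real.sign := Real.monotone_sign.measurable

theorem Real.abs_sign_le_one (r : ℝ) : |Real.sign r| ≤ 1 := by
  rcases Real.sign_apply_eq r with h | h | h <;> simp [h]

theorem nonneg_of_norm_sub_le_mul {E F : Type*} [NormedAddCommGroup E] [Nontrivial E]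
    [SeminormedAddCommGroup F] {f : E → F} {L : ℝ} (h : ∀ a b, ‖f a - f b‖ ≤ L * ‖a - b‖) :
    0 ≤ L := by
  obtain ⟨a, ha⟩ := exists_ne (0 : E)
  refine le_of_mul_le_mul_right ?_ (norm_pos_iff.2 (sub_ne_zero.2 ha))
  simpa using (norm_nonneg _).trans (h a 0)

theorem continuous_of_norm_sub_le_mul {E F : Type*} [SeminormedAddCommGroup E]
    [SeminormedAddCommGroup F] {f : E → F} {L : ℝ} (h : ∀ a b, ‖f a - f b‖ ≤ L * ‖a - b‖) :
    Continuous f :=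
  (LipschitzWith.of_dist_le' (K := L) (by simpa only [dist_eq_norm] using h)).continuous

theorem le_add_inner_gradient_add_of_lipschitz {F : Type*} [NormedAddCommGroup F]
    [InnerProductSpace ℝ F] [CompleteSpace F] {f : F → ℝ} (hf : Differentiable ℝ f) {L : ℝ}
    (hL : ∀ a b, ‖gradient f a - gradient f b‖ ≤ L * ‖a - b‖) (x v : F) :
    f (x + v) ≤ f x + ⟪gradient f x, v⟫ + L / 2 * ‖v‖ ^ 2 := by
  set ψ : ℝ → ℝ := fun s => f (x + s • v) - s * ⟪gradient f x, v⟫ - L / 2 * ‖v‖ ^ 2 * s ^ 2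
  have hψ' (s : ℝ) : HasDerivAt ψ
      (⟪gradient f (x + s • v) - gradient f x, v⟫ - L * ‖v‖ ^ 2 * s) s := by
    have hline : HasDerivAt (fun s : ℝ => x + s • v) v s := by
      simpa using ((hasDerivAt_id s).smul_const v).const_add x
    have := (((hf _).hasGradientAt.hasFDerivAt.comp_hasDerivAt s hline).sub
      ((hasDerivAt_id s).mul_const ⟪gradient f x, v⟫)).sub
      ((hasDerivAt_pow 2 s).const_mul (L / 2 * ‖v‖ ^ 2))
    refine this.congr_deriv ?_
    rw [InnerProductSpace.toDual_apply_apply, inner_sub_left]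
    ring
  have hψc : Continuous ψ := continuous_iff_continuousAt.2 fun s => (hψ' s).continuousAt
  have hanti : AntitoneOn ψ (Icc 0 1) := by
    refine antitoneOn_of_hasDerivWithinAt_nonpos (convex_Icc 0 1) hψc.continuousOn
      (fun s _ => (hψ' s).hasDerivWithinAt) fun s hs => ?_
    rw [interior_Icc] at hs
    calc ⟪gradient f (x + s • v) - gradient f x, v⟫ - L * ‖v‖ ^ 2 * s
        ≤ ‖gradient f (x + s • v) - gradient f x‖ * ‖v‖ - L * ‖v‖ ^ 2 * s := by
          gcongr; exact real_inner_le_norm _ _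
      _ ≤ L * ‖s • v‖ * ‖v‖ - L * ‖v‖ ^ 2 * s := by
          gcongr; simpa using hL (x + s • v) x
      _ = 0 := by rw [norm_smul, Real.norm_of_nonneg hs.1.le]; ring
  have := hanti (left_mem_Icc.2 zero_le_one) (right_mem_Icc.2 zero_le_one) zero_le_one
  simp only [ψ, zero_smul, add_zero, one_smul, zero_mul, sub_zero, one_mul, one_pow, mul_one,
    ne_eq, OfNat.ofNat_ne_zero, not_false_eq_true, zero_pow, mul_zero] at this
  linarith

theorem integrable_comp_of_norm_le {Ω E : Type*} [MeasurableSpace Ω] {ν : Measure Ω}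
    [IsFiniteMeasure ν] [NormedAddCommGroup E] [ProperSpace E] [MeasurableSpace E]
    [OpensMeasurableSpace E] {X : Ω → E} (hX : Measurable X) (hXb : ∃ C, ∀ ω, ‖X ω‖ ≤ C)
    {φ : E → ℝ} (hφ : Continuous φ) : Integrable (fun ω => φ (X ω)) ν := by
  obtain ⟨C, hC⟩ := hXb
  obtain ⟨M, hM⟩ := (isCompact_closedBall (0 : E) C).exists_bound_of_continuousOn hφ.continuousOn
  exact .of_bound (hφ.measurable.comp hX).aestronglyMeasurable M
    (ae_of_all _ fun ω => hM _ (mem_closedBall_zero_iff.2 (hC ω)))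

section UpdateCoordinate

variable {ι : Type*} [Fintype ι] [DecidableEq ι] {X : ι → Type*} [∀ i, MeasurableSpace (X i)]
  (μ : ∀ i, Measure (X i)) [∀ i, IsProbabilityMeasure (μ i)]

theorem measurePreserving_update (i : ι) :
    MeasurePreserving (fun p : (∀ j, X j) × X i => update p.1 i p.2)
      ((Measure.pi μ).prod (μ i)) (Measure.pi μ) := by
  refine ⟨measurable_update', (Measure.pi_eq fun s hs => ?_).symm⟩
  have hpre : (fun p : (∀ j, X j) × X i => update p.1 i p.2) ⁻¹' univ.pi s =
      univ.pi (update s i univ) ×ˢ s i := by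
    ext ⟨ω, x⟩
    simp only [mem_preimage, mem_prod, mem_univ_pi]
    rw [forall_update_iff ω fun j y => y ∈ s j, forall_update_iff s fun j S => ω j ∈ S]
    simp [and_comm]
  rw [Measure.map_apply measurable_update' (.univ_pi hs), hpre, Measure.prod_prod, Measure.pi_pi,
    ← Finset.prod_erase_mul _ _ (Finset.mem_univ i), update_self, measure_univ, mul_one,
    ← Finset.prod_erase_mul _ _ (Finset.mem_univ i)]
  congr 1
  exact Finset.prod_congr rfl fun j hj => by rw [update_of_ne (Finset.ne_of_mem_erase hj)]

theorem integral_eq_integral_integral_update (i : ι) {f : (∀ j, X j) → ℝ}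
    (hf : Integrable f (Measure.pi μ)) :
    ∫ ω, f ω ∂Measure.pi μ = ∫ ω, ∫ x, f (update ω i x) ∂μ i ∂Measure.pi μ := by
  have hmp := measurePreserving_update μ i
  rw [← hmp.map_eq] at hf
  calc ∫ ω, f ω ∂Measure.pi μ
      = ∫ ω, f ω ∂((Measure.pi μ).prod (μ i)).map fun p => update p.1 i p.2 := by rw [hmp.map_eq]
    _ = _ := integral_map hmp.measurable.aemeasurable hf.1
    _ = _ := integral_prod _ (hf.comp_measurable hmp.measurable)

theorem integral_comp_eval_of_update_eq (i : ι) {Y : Type*} {g : (∀ j, X j) → Y}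
    (hg : ∀ ω x, g (update ω i x) = g ω) {F : Y → X i → ℝ}
    (hF : Integrable (fun ω => F (g ω) (ω i)) (Measure.pi μ)) :
    ∫ ω, F (g ω) (ω i) ∂Measure.pi μ = ∫ ω, ∫ x, F (g ω) x ∂μ i ∂Measure.pi μ := by
  simp only [integral_eq_integral_integral_update μ i hF, hg, update_self]

end UpdateCoordinate

section Recursion

variable {T : ℕ} {X Y : Type*} {G : Fin T → Y → X → Y} {y₀ : Y} {δ : ℕ → (Fin T → X) → Y}

theorem iterate_update_eq_of_le (h0 : ∀ ω, δ 0 ω = y₀)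
    (hrec : ∀ (t : Fin T) ω, δ (t + 1) ω = G t (δ t ω) (ω t)) :
    ∀ (s : ℕ) (t : Fin T), s ≤ t → ∀ ω x, δ s (update ω t x) = δ s ω
  | 0, _, _, ω, x => by rw [h0, h0]
  | s + 1, t, hst, ω, x => by
    have hs : s < T := by omega
    rw [hrec ⟨s, hs⟩, hrec ⟨s, hs⟩, iterate_update_eq_of_le h0 hrec s t (by omega),
      update_of_ne (Fin.ne_of_lt hst)]

theorem measurable_iterate [MeasurableSpace X] [MeasurableSpace Y] (h0 : ∀ ω, δ 0 ω = y₀)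
    (hrec : ∀ (t : Fin T) ω, δ (t + 1) ω = G t (δ t ω) (ω t))
    (hG : ∀ t, Measurable (uncurry (G t))) : ∀ s ≤ T, Measurable (δ s)
  | 0, _ => by simp_rw [funext h0]; exact measurable_const
  | s + 1, hs => by
    rw [funext (hrec ⟨s, hs⟩)]
    exact (hG _).comp ((measurable_iterate h0 hrec hG s (by omega) |>.prodMk
      (measurable_pi_apply _)))

theorem exists_norm_iterate_le [SeminormedAddCommGroup Y] (h0 : ∀ ω, δ 0 ω = y₀)
    (hrec : ∀ (t : Fin T) ω, δ (t + 1) ω = G t (δ t ω) (ω t))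
    (hG : ∀ t, ∃ c, ∀ y z, ‖G t y z - y‖ ≤ c) : ∀ s ≤ T, ∃ C, ∀ ω, ‖δ s ω‖ ≤ C
  | 0, _ => ⟨‖y₀‖, fun ω => by rw [h0]⟩
  | s + 1, hs => by
    obtain ⟨C, hC⟩ := exists_norm_iterate_le h0 hrec hG s (by omega)
    obtain ⟨c, hc⟩ := hG ⟨s, hs⟩
    refine ⟨C + c, fun ω => ?_⟩
    rw [hrec ⟨s, hs⟩]
    exact (norm_le_insert' _ _).trans (add_le_add (hC ω) (hc _ _))

end Recursion

instance isProbabilityMeasure_prodGaussian (T D : ℕ) :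
    IsProbabilityMeasure (prodGaussian T D) := by
  unfold prodGaussian
  infer_instance

section Gaussian

theorem Phi_eq_measureReal (x : ℝ) : Phi x = (gaussianReal 0 1).real (Iic x) := rfl

theorem Phi_neg (x : ℝ) : Phi (-x) = 1 - Phi x := by
  have := nullSingletonClass_gaussianReal (μ := 0) one_ne_zero
  have hsymm : (gaussianReal 0 1).map (fun y => -y) = gaussianReal 0 1 := by
    rw [gaussianReal_map_neg, neg_zero]
  have hpre : (fun y : ℝ => -y) ⁻¹' Iic (-x) = Ici x := by
    ext y
    simp
  rw [Phi_eq_measureReal, ← hsymm, map_measureReal_apply (by fun_prop) measurableSet_Iic, hpre,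
    measureReal_congr Ioi_ae_eq_Ici.symm, ← compl_Iic,
    probReal_compl_eq_one_sub measurableSet_Iic, Phi_eq_measureReal]

theorem integral_sign_add_mul_gaussianReal (a : ℝ) {γ : ℝ} (hγ : 0 < γ) :
    ∫ z, Real.sign (a + γ * z) ∂gaussianReal 0 1 = 2 * Phi (a / γ) - 1 := by
  have := nullSingletonClass_gaussianReal (μ := 0) one_ne_zero
  set c := -(a / γ)
  have hsign : ∀ z, Real.sign (a + γ * z) =
      (Ioi c).indicator 1 z - (Iio c).indicator 1 z := by
    intro z
    have hz : a + γ * z = γ * (z - c) := by simp only [c]; field_simp; ring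
    rcases lt_trichotomy z c with h | rfl | h
    · simp [h, h.not_gt, hz, Real.sign_of_neg (mul_neg_of_pos_of_neg hγ (sub_neg.2 h))]
    · simp [hz]
    · simp [h, h.not_gt, hz, Real.sign_of_pos (mul_pos hγ (sub_pos.2 h))]
  rw [integral_congr_ae (ae_of_all _ hsign), integral_sub
    ((integrable_const 1).indicator measurableSet_Ioi)
    ((integrable_const 1).indicator measurableSet_Iio),
    integral_indicator_one measurableSet_Ioi, integral_indicator_one measurableSet_Iio,
    measureReal_congr Iio_ae_eq_Iic, ← compl_Iic, probReal_compl_eq_one_sub measurableSet_Iic,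
    ← Phi_eq_measureReal, Phi_neg]
  ring

theorem mul_two_mul_Phi_sub_one_eq_abs (a : ℝ) {γ : ℝ} :
    a * (2 * Phi (a / γ) - 1) = |a| * (2 * Phi (|a| / γ) - 1) := by
  rcases le_or_gt 0 a with h | h
  · rw [abs_of_nonneg h]
  · rw [abs_of_neg h, neg_div, Phi_neg]
    ring

end Gaussian

section PerturbedSign

variable {D : ℕ} (γ : ℝ)

noncomputable def perturbedSign (g : EuclideanSpace ℝ (Fin D)) (z : Fin D → ℝ) :
    EuclideanSpace ℝ (Fin D) :=
  (WithLp.equiv 2 (Fin D → ℝ)).symm fun i => Real.sign (g i + γ * z i)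

theorem norm_perturbedSign_le (g : EuclideanSpace ℝ (Fin D)) (z : Fin D → ℝ) :
    ‖perturbedSign γ g z‖ ≤ √D := by
  rw [EuclideanSpace.norm_eq]
  refine Real.sqrt_le_sqrt ?_
  calc ∑ i, ‖perturbedSign γ g z i‖ ^ 2 ≤ ∑ _i : Fin D, (1 : ℝ) := by
        gcongr with i
        rw [Real.norm_eq_abs, sq_abs]
        exact (sq_le_one_iff_abs_le_one _).2 (Real.abs_sign_le_one _)
    _ = D := by simp

theorem measurable_perturbedSign :
    Measurable (uncurry (perturbedSign (D := D) γ)) := by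
  refine (WithLp.measurable_toLp 2 _).comp (measurable_pi_lambda _ fun i => ?_)
  fun_prop

theorem inner_perturbedSign (g : EuclideanSpace ℝ (Fin D)) (z : Fin D → ℝ) :
    ⟪g, perturbedSign γ g z⟫ = ∑ i, g i * Real.sign (g i + γ * z i) := by
  simp [perturbedSign, PiLp.inner_apply, mul_comm]

theorem integral_inner_perturbedSign (hγ : 0 < γ) (g : EuclideanSpace ℝ (Fin D)) :
    ∫ z, ⟪g, perturbedSign γ g z⟫ ∂Measure.pi (fun _ => gaussianReal 0 1) =
      ∑ i, |g i| * (2 * Phi (|g i| / γ) - 1) := by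
  have hcoord (i : Fin D) :
      ∫ z, Real.sign (g i + γ * z i) ∂Measure.pi (fun _ => gaussianReal 0 1) =
        ∫ y, Real.sign (g i + γ * y) ∂gaussianReal 0 1 := by
    rw [← integral_map (by fun_prop : Measurable fun z : Fin D → ℝ => z i).aemeasurable
      (by fun_prop : Measurable fun y => Real.sign (g i + γ * y)).aestronglyMeasurable,
      (measurePreserving_eval (fun _ => gaussianReal 0 1) i).map_eq]
  simp_rw [inner_perturbedSign]
  rw [integral_finsetSum _ fun i _ => ?_]
  · refine Finset.sum_congr rfl fun i _ => ?_
    rw [integral_const_mul, hcoord, integral_sign_add_mul_gaussianReal _ hγ,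
      mul_two_mul_Phi_sub_one_eq_abs]
  · have hm : Measurable fun z : Fin D → ℝ => g i * Real.sign (g i + γ * z i) := by fun_prop
    refine (integrable_const |g i|).mono' hm.aestronglyMeasurable (ae_of_all _ fun z => ?_)
    rw [norm_mul, Real.norm_eq_abs, Real.norm_eq_abs]
    exact mul_le_of_le_one_right (abs_nonneg _) (Real.abs_sign_le_one _)

end PerturbedSign

section PerturbedSignDescent

variable {D : ℕ} {l : EuclideanSpace ℝ (Fin D) → ℝ} {L γ : ℝ}

noncomputable def perturbedSignStep (l : EuclideanSpace ℝ (Fin D) → ℝ) (γ η : ℝ)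
    (x : EuclideanSpace ℝ (Fin D)) (z : Fin D → ℝ) : EuclideanSpace ℝ (Fin D) :=
  x - η • perturbedSign γ (gradient l x) z

theorem measurable_perturbedSignStep (hgrad : Continuous (gradient l)) (γ η : ℝ) :
    Measurable (uncurry (perturbedSignStep l γ η)) :=
  measurable_fst.sub (((measurable_perturbedSign γ).comp
    ((hgrad.measurable.comp measurable_fst).prodMk measurable_snd)).const_smul η)

theorem norm_perturbedSignStep_sub_le (γ η : ℝ) (x : EuclideanSpace ℝ (Fin D))
    (z : Fin D → ℝ) : ‖perturbedSignStep l γ η x z - x‖ ≤ |η| * √D := by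
  simpa [perturbedSignStep, norm_smul] using
    mul_le_mul_of_nonneg_left (norm_perturbedSign_le γ _ z) (abs_nonneg η)

theorem apply_perturbedSignStep_le (hl : Differentiable ℝ l)
    (hL : ∀ a b, ‖gradient l a - gradient l b‖ ≤ L * ‖a - b‖) (hL0 : 0 ≤ L) (η : ℝ)
    (x : EuclideanSpace ℝ (Fin D)) (z : Fin D → ℝ) :
    l (perturbedSignStep l γ η x z) ≤
      l x - η * ⟪gradient l x, perturbedSign γ (gradient l x) z⟫ + L * D / 2 * η ^ 2 := by
  rw [perturbedSignStep]
  set u := perturbedSign γ (gradient l x) z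
  have hu : ‖u‖ ^ 2 ≤ D := by
    simpa using pow_le_pow_left₀ (norm_nonneg _) (norm_perturbedSign_le γ (gradient l x) z) 2
  have := le_add_inner_gradient_add_of_lipschitz hl hL x (-(η • u))
  rw [← sub_eq_add_neg, inner_neg_right, real_inner_smul_right, norm_neg, norm_smul, mul_pow,
    Real.norm_eq_abs, sq_abs] at this
  nlinarith [mul_le_mul_of_nonneg_left hu (mul_nonneg hL0 (sq_nonneg η))]

theorem integral_perturbedSignStep_descent {T : ℕ} (hl : Differentiable ℝ l)
    (hL : ∀ a b, ‖gradient l a - gradient l b‖ ≤ L * ‖a - b‖) (hL0 : 0 ≤ L) (hγ : 0 < γ)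
    (η : ℝ) (t : Fin T) {x x' : (Fin T → Fin D → ℝ) → EuclideanSpace ℝ (Fin D)}
    (hxm : Measurable x) (hxb : ∃ C, ∀ ω, ‖x ω‖ ≤ C)
    (hxt : ∀ ω z, x (update ω t z) = x ω)
    (hx' : ∀ ω, x' ω = perturbedSignStep l γ η (x ω) (ω t))
    (hlx : Integrable (fun ω => l (x ω)) (prodGaussian T D))
    (hlx' : Integrable (fun ω => l (x' ω)) (prodGaussian T D)) :
    η * ∫ ω, ∑ i, |gradient l (x ω) i| * (2 * Phi (|gradient l (x ω) i| / γ) - 1)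
        ∂prodGaussian T D ≤
      ∫ ω, l (x ω) ∂prodGaussian T D - ∫ ω, l (x' ω) ∂prodGaussian T D + L * D / 2 * η ^ 2 := by
  have hgrad := continuous_of_norm_sub_le_mul hL
  set f := fun ω : Fin T → Fin D → ℝ =>
    ⟪gradient l (x ω), perturbedSign γ (gradient l (x ω)) (ω t)⟫
  have hf : Integrable f (prodGaussian T D) := by
    refine (integrable_comp_of_norm_le (φ := fun y => ‖gradient l y‖ * √D) hxm hxb
      (hgrad.norm.mul continuous_const)).mono' ?_ (ae_of_all _ fun ω => ?_)
    · have hgx : Measurable fun ω => gradient l (x ω) := hgrad.measurable.comp hxm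
      exact (hgx.inner ((measurable_perturbedSign γ).comp
        (hgx.prodMk (measurable_pi_apply t)))).aestronglyMeasurable
    · exact (norm_inner_le_norm _ _).trans
        (mul_le_mul_of_nonneg_left (norm_perturbedSign_le _ _ _) (norm_nonneg _))
  have hmean : ∫ ω, f ω ∂prodGaussian T D =
      ∫ ω, ∑ i, |gradient l (x ω) i| * (2 * Phi (|gradient l (x ω) i| / γ) - 1)
        ∂prodGaussian T D := by
    rw [prodGaussian, integral_comp_eval_of_update_eq _ t hxt
      (F := fun y z => ⟪gradient l y, perturbedSign γ (gradient l y) z⟫) hf]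
    simp_rw [integral_inner_perturbedSign γ hγ]
  have hpt (ω) : l (x' ω) ≤ l (x ω) - η * f ω + L * D / 2 * η ^ 2 :=
    hx' ω ▸ apply_perturbedSignStep_le hl hL hL0 η (x ω) (ω t)
  have hsub : Integrable (fun ω => l (x ω) - η * f ω) (prodGaussian T D) :=
    hlx.sub (hf.const_mul η)
  have : ∫ ω, l (x' ω) ∂prodGaussian T D ≤
      ∫ ω, (l (x ω) - η * f ω + L * D / 2 * η ^ 2) ∂prodGaussian T D :=
    integral_mono hlx' (hsub.add (integrable_const _)) hpt
  rw [integral_add hsub (integrable_const _), integral_sub hlx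
    (hf.const_mul η), integral_const_mul, hmean, integral_const] at this
  simp only [probReal_univ, smul_eq_mul, one_mul] at this
  linarith

end PerturbedSignDescent

theorem stmt8_general (D T : ℕ) (hD : 1 ≤ D)
    (l : EuclideanSpace ℝ (Fin D) → ℝ) (hl : Differentiable ℝ l)
    (hbdd : BddBelow (Set.range l))
    (L : ℝ) (hL : ∀ a b, ‖gradient l a - gradient l b‖ ≤ L * ‖a - b‖)
    (γ : ℝ) (hγ : 0 < γ)
    (δ0 : EuclideanSpace ℝ (Fin D))
    (ε : Fin T → ℝ)
    (δseq : ℕ → (Fin T → Fin D → ℝ) → EuclideanSpace ℝ (Fin D))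
    (hδ0 : ∀ ω, δseq 0 ω = δ0)
    (hrec : ∀ (t : Fin T) (ω : Fin T → Fin D → ℝ),
      δseq ((t : ℕ) + 1) ω = δseq (t : ℕ) ω -
        ε t • (WithLp.equiv 2 (Fin D → ℝ)).symm
          (fun i => Real.sign (gradient l (δseq (t : ℕ) ω) i + γ * ω t i))) :
    ∑ t : Fin T, ε t *
        (∫ ω, (∑ i, |gradient l (δseq (t : ℕ) ω) i| *
            (2 * Phi (|gradient l (δseq (t : ℕ) ω) i| / γ) - 1))
          ∂(prodGaussian T D)) ≤
      l δ0 - sInf (Set.range l) + L * D / 2 * ∑ t : Fin T, (ε t) ^ 2 := by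
  have hstep : ∀ (t : Fin T) ω,
      δseq (t + 1) ω = perturbedSignStep l γ (ε t) (δseq t ω) (ω t) := hrec
  have hL0 : 0 ≤ L := by
    have : NeZero D := ⟨by omega⟩
    exact nonneg_of_norm_sub_le_mul hL
  have hmeas : ∀ s ≤ T, Measurable (δseq s) := measurable_iterate hδ0 hstep
    fun t => measurable_perturbedSignStep (continuous_of_norm_sub_le_mul hL) γ (ε t)
  have hbound : ∀ s ≤ T, ∃ C, ∀ ω, ‖δseq s ω‖ ≤ C := exists_norm_iterate_le hδ0 hstep
    fun t => ⟨_, norm_perturbedSignStep_sub_le γ (ε t)⟩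
  have hint (s : ℕ) (hs : s ≤ T) : Integrable (fun ω => l (δseq s ω)) (prodGaussian T D) :=
    integrable_comp_of_norm_le (hmeas s hs) (hbound s hs) hl.continuous
  have hdescent (t : Fin T) :=
    integral_perturbedSignStep_descent hl hL hL0 hγ (ε t) t (hmeas t t.isLt.le)
      (hbound t t.isLt.le) (iterate_update_eq_of_le hδ0 hstep t t le_rfl) (hstep t)
      (hint t t.isLt.le) (hint (t + 1) t.isLt)
  have hinf : sInf (range l) ≤ ∫ ω, l (δseq T ω) ∂prodGaussian T D := by
    simpa using integral_mono (integrable_const _) (hint T le_rfl)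
      fun ω => csInf_le hbdd (mem_range_self (δseq T ω))
  set a := fun s => ∫ ω, l (δseq s ω) ∂prodGaussian T D
  calc _ ≤ ∑ t : Fin T, (a t - a (t + 1) + L * D / 2 * ε t ^ 2) :=
        Finset.sum_le_sum fun t _ => hdescent t
    _ = a 0 - a T + L * D / 2 * ∑ t : Fin T, ε t ^ 2 := by
        rw [Finset.sum_add_distrib, Fin.sum_univ_eq_sum_range (fun s => a s - a (s + 1)),
          Finset.sum_range_sub', Finset.mul_sum]
    _ ≤ _ := by
        simp only [a, hδ0, integral_const, probReal_univ, one_smul]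
        linarith

/-- telescoped bound: for `l` differentiable, bounded below, with
`L`-Lipschitz gradient, and iterates `δ^{t+1} = δ^t − ε_t·sign(∇l(δ^t) + γ z_t)` driven by
independent Gaussian perturbations `z_0, …, z_{T−1}`,
`Σ_t ε_t E[Σᵢ |∂ᵢl(δ^t)| (2Φ(|∂ᵢl(δ^t)|/γ) − 1)] ≤ l(δ⁰) − inf l + (L D / 2) Σ_t ε_t²`. -/
theorem stmt8 (D T : ℕ) (hD : 1 ≤ D)
    (l : EuclideanSpace ℝ (Fin D) → ℝ) (hl : Differentiable ℝ l)
    (hbdd : BddBelow (Set.range l))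
    (L : ℝ) (hL : ∀ a b, ‖gradient l a - gradient l b‖ ≤ L * ‖a - b‖)
    (γ : ℝ) (hγ : 0 < γ)
    (δ0 : EuclideanSpace ℝ (Fin D))
    (ε : Fin T → ℝ) (hε : ∀ t, 0 ≤ ε t)
    (δseq : ℕ → (Fin T → Fin D → ℝ) → EuclideanSpace ℝ (Fin D))
    (hδ0 : ∀ ω, δseq 0 ω = δ0)
    (hrec : ∀ (t : Fin T) (ω : Fin T → Fin D → ℝ),
      δseq ((t : ℕ) + 1) ω = δseq (t : ℕ) ω -
        ε t • (WithLp.equiv 2 (Fin D → ℝ)).symm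
          (fun i => Real.sign (gradient l (δseq (t : ℕ) ω) i + γ * ω t i))) :
    ∑ t : Fin T, ε t *
        (∫ ω, (∑ i, |gradient l (δseq (t : ℕ) ω) i| *
            (2 * Phi (|gradient l (δseq (t : ℕ) ω) i| / γ) - 1))
          ∂(prodGaussian T D)) ≤
      l δ0 - sInf (Set.range l) + L * D / 2 * ∑ t : Fin T, (ε t) ^ 2 :=
  stmt8_general D T hD l hl hbdd L hL γ hγ δ0 ε δseq hδ0 hrec
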